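/- arXiv:2605.01509 — 8 statements merged into one kernel-verified Lean document; each statement's English description precedes it below -/
import Mathlib

section
/- Let (X, τ) be a collectionwise normal submetrizable topological space and let 𝓕 be a locally finite collection of closed subsets of (X, τ) such that for every subfamily 𝓕′ ⊆ 𝓕 the union ⋃𝓕′ is a Gδ set in (X, τ). Then there exists a topology σ ⊆ τ on X such that (X, σ) is metrizable and 𝓕 is a locally finite collection of closed subsets of (X, σ). -/
open Set Topology

/-- A family of sets is locally finite (w.r.t. an explicit topology `t`) if every point has a
neighborhood meeting only finitely many members of the family. -/
def LocallyFiniteFamily {X : Type*} (t : TopologicalSpace X) (F : Set (Set X)) : Prop :=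
  ∀ x : X, ∃ U ∈ @nhds X t x, {C ∈ F | (C ∩ U).Nonempty}.Finite

/-- A family of subsets indexed by `ι` is discrete (w.r.t. an explicit topology `t`) if every
point has a neighborhood meeting at most one member of the family. -/
def DiscreteFamily {X : Type*} {ι : Type*} (t : TopologicalSpace X) (F : ι → Set X) : Prop :=
  ∀ x : X, ∃ U ∈ @nhds X t x, {i | (F i ∩ U).Nonempty}.Subsingleton

/-- A T1 space is collectionwise normal if every discrete family of pairwise disjoint closed
sets can be separated by a discrete family of pairwise disjoint open sets. -/
def CollectionwiseNormal (X : Type u) [t : TopologicalSpace X] : Prop :=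
  T1Space X ∧ ∀ (ι : Type u) (F : ι → Set X),
    (∀ i, IsClosed (F i)) → Pairwise (Function.onFun Disjoint F) → DiscreteFamily t F →
      ∃ W : ι → Set X, (∀ i, IsOpen (W i)) ∧ Pairwise (Function.onFun Disjoint W) ∧
        DiscreteFamily t W ∧ ∀ i, F i ⊆ W i

/-- A topology `t` is submetrizable if there is a coarser metrizable topology. -/
def Submetrizable {X : Type*} (t : TopologicalSpace X) : Prop :=
  ∃ s : TopologicalSpace X, (∀ U, s.IsOpen U → t.IsOpen U) ∧
    @TopologicalSpace.MetrizableSpace X s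


/-!
Call `pattern 𝓕 x = {C ∈ 𝓕 | x ∈ C}` the pattern of `x`, and for `A ⊆ 𝓕` write the Gδ set
`⋃₀ (𝓕 \ A)` as `⋂ₙ V A n`. For fixed `n` the closed sets `⋂₀ A \ V A n` consist of points of
pattern exactly `A`; by local finiteness they form a discrete family, and every point lies in the
one indexed by its own pattern for some `n`. Collectionwise normality expands each of these
countably many discrete families to a discrete open family inside the sets `(⋃₀ (𝓕 \ A))ᶜ`, and
Urysohn functions subordinate to it assemble into a continuous map `Φ : X → ℕ → ℓ^∞`. The topology
generated by the given coarser metrizable topology and by `Φ` is metrizable, as `x ↦ (x, Φ x)`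
embeds it into a metrizable product, and in it each `x` has a neighbourhood that only meets the
members of `𝓕` containing `x`; this makes `𝓕` closed and locally finite there.
-/

open scoped ENNReal

namespace LocallyFiniteFamily

variable {X : Type*} [t : TopologicalSpace X] {F G : Set (Set X)}

theorem mono (h : LocallyFiniteFamily t F) (hGF : G ⊆ F) : LocallyFiniteFamily t G := fun x =>
  let ⟨U, hU, hfin⟩ := h x
  ⟨U, hU, hfin.subset fun _ hC => ⟨hGF hC.1, hC.2⟩⟩

theorem locallyFinite (h : LocallyFiniteFamily t F) : LocallyFinite ((↑) : F → Set X) := fun x =>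
  let ⟨U, hU, hfin⟩ := h x
  ⟨U, hU, (hfin.preimage Subtype.val_injective.injOn).subset fun C hC => ⟨C.2, hC⟩⟩

theorem finite_setOf_mem (h : LocallyFiniteFamily t F) (x : X) : {C ∈ F | x ∈ C}.Finite :=
  let ⟨_, hU, hfin⟩ := h x
  hfin.subset fun _ hC => ⟨hC.1, x, hC.2, mem_of_mem_nhds hU⟩

theorem isClosed_sUnion (h : LocallyFiniteFamily t F) (hcl : ∀ C ∈ F, IsClosed C)
    (hGF : G ⊆ F) : IsClosed (⋃₀ G) := by
  rw [sUnion_eq_iUnion]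
  exact (h.mono hGF).locallyFinite.isClosed_iUnion fun C => hcl C (hGF C.2)

end LocallyFiniteFamily

theorem DiscreteFamily.locallyFinite {X ι : Type*} [t : TopologicalSpace X] {F : ι → Set X}
    (h : DiscreteFamily t F) : LocallyFinite F := fun x =>
  let ⟨U, hU, hsub⟩ := h x
  ⟨U, hU, hsub.finite⟩

theorem CollectionwiseNormal.normalSpace {X : Type u} [t : TopologicalSpace X]
    (h : CollectionwiseNormal X) : NormalSpace X := by
  refine ⟨fun s₁ s₂ hs₁ hs₂ hd => ?_⟩
  have hdisc : DiscreteFamily t fun b : ULift Bool => cond b.down s₁ s₂ := by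
    intro x
    by_cases hx : x ∈ s₁
    · refine ⟨s₂ᶜ, hs₂.isOpen_compl.mem_nhds (hd.notMem_of_mem_left hx),
        (subsingleton_singleton (a := ⟨true⟩)).anti ?_⟩
      rintro ⟨_ | _⟩ ⟨y, hy, hy'⟩ <;> simp_all
    · refine ⟨s₁ᶜ, hs₁.isOpen_compl.mem_nhds hx, (subsingleton_singleton (a := ⟨false⟩)).anti ?_⟩
      rintro ⟨_ | _⟩ ⟨y, hy, hy'⟩ <;> simp_all
  obtain ⟨W, hWo, hWd, -, hFW⟩ := h.2 (ULift Bool) _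
    (fun ⟨b⟩ => by cases b <;> assumption)
    (by rintro ⟨_ | _⟩ ⟨_ | _⟩ hne <;> simp_all [Function.onFun, disjoint_comm]) hdisc
  exact ⟨W ⟨true⟩, W ⟨false⟩, hWo _, hWo _, hFW ⟨true⟩, hFW ⟨false⟩, hWd (by simp)⟩

def pattern {X : Type*} (F : Set (Set X)) (x : X) : Set (Set X) := {C ∈ F | x ∈ C}

section Pattern

variable {X : Type*} {F A : Set (Set X)} {V : Set X} {x : X}

theorem pattern_subset : pattern F x ⊆ F := sep_subset _ _

theorem notMem_sUnion_diff_pattern : x ∉ ⋃₀ (F \ pattern F x) :=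
  fun ⟨_, ⟨hCF, hC⟩, hxC⟩ => hC ⟨hCF, hxC⟩

theorem mem_sUnion_diff_of_ssubset_pattern (hA : A ⊂ pattern F x) : x ∈ ⋃₀ (F \ A) :=
  let ⟨C, ⟨hCF, hxC⟩, hCA⟩ := exists_of_ssubset hA
  ⟨C, ⟨hCF, hCA⟩, hxC⟩

theorem pattern_eq_of_mem_sInter_diff (hA : A ⊆ F) (hV : ⋃₀ (F \ A) ⊆ V) (hx : x ∈ ⋂₀ A \ V) :
    pattern F x = A := by
  ext C
  refine ⟨fun ⟨hCF, hxC⟩ => ?_, fun hCA => ⟨hA hCA, hx.1 C hCA⟩⟩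
  by_contra hCA
  exact hx.2 (hV ⟨C, ⟨hCF, hCA⟩, hxC⟩)

theorem pairwise_disjoint_sInter_diff {V : Set (Set X) → Set X} (hV : ∀ A, ⋃₀ (F \ A) ⊆ V A) :
    Pairwise (Function.onFun Disjoint fun A : Iic F => ⋂₀ (A : Set (Set X)) \ V A) := by
  intro A B hAB
  refine disjoint_left.2 fun x hxA hxB => hAB (Subtype.ext ?_)
  rw [← pattern_eq_of_mem_sInter_diff A.2 (hV A) hxA, pattern_eq_of_mem_sInter_diff B.2 (hV B) hxB]

end Pattern

/-- Near `x` only members of `F` containing `x` occur, and the neighbourhoods `V B` of `x`, for the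
finitely many `B ⊂ pattern F x`, exclude the remaining smaller patterns. -/
theorem discreteFamily_sInter_diff {X : Type*} [t : TopologicalSpace X] {F : Set (Set X)}
    {V : Set (Set X) → Set X} (hlf : LocallyFiniteFamily t F) (hcl : ∀ C ∈ F, IsClosed C)
    (hVo : ∀ A, IsOpen (V A)) (hV : ∀ A, ⋃₀ (F \ A) ⊆ V A) :
    DiscreteFamily t fun A : Iic F => ⋂₀ (A : Set (Set X)) \ V A := by
  intro x
  have hsub : {B | B ⊂ pattern F x}.Finite :=
    (hlf.finite_setOf_mem x).finite_subsets.subset fun _ hB => show _ ⊆ pattern F x from hB.subset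
  refine ⟨(⋂ (C : F) (_ : x ∉ (C : Set X)), (C : Set X)ᶜ) ∩ ⋂ B ∈ {B | B ⊂ pattern F x}, V B,
    Filter.inter_mem (hlf.locallyFinite.iInter_compl_mem_nhds (fun C => hcl C C.2) x)
      ((Filter.biInter_mem hsub).2 fun B hB =>
        (hVo B).mem_nhds (hV B (mem_sUnion_diff_of_ssubset_pattern hB))), ?_⟩
  suffices ∀ A : Iic F, _ → (A : Set (Set X)) = pattern F x from
    fun A hA B hB => Subtype.ext ((this A hA).trans (this B hB).symm)
  rintro A ⟨y, hyA, hyC, hyV⟩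
  have hAx : (A : Set (Set X)) ⊆ pattern F x := fun C hCA => by
    by_contra hxC
    exact mem_iInter₂.1 hyC ⟨C, A.2 hCA⟩ (fun hx => hxC ⟨A.2 hCA, hx⟩) (hyA.1 C hCA)
  by_contra hne
  exact hyA.2 (mem_iInter₂.1 hyV A (ssubset_iff_subset_ne.2 ⟨hAx, hne⟩))

theorem CollectionwiseNormal.exists_locallyFinite_urysohn {X ι : Type u} [t : TopologicalSpace X]
    (hX : CollectionwiseNormal X) {Q G : ι → Set X} (hQ : ∀ i, IsClosed (Q i))
    (hdisj : Pairwise (Function.onFun Disjoint Q)) (hdisc : DiscreteFamily t Q)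
    (hG : ∀ i, IsOpen (G i)) (hQG : ∀ i, Q i ⊆ G i) :
    ∃ f : ι → C(X, ℝ), (∀ i, EqOn (f i) 1 (Q i)) ∧ (∀ i, Function.support (f i) ⊆ G i) ∧
      (∀ i x, f i x ∈ Icc (0 : ℝ) 1) ∧ LocallyFinite fun i => Function.support (f i) := by
  have := hX.normalSpace
  obtain ⟨W, hWo, -, hWd, hQW⟩ := hX.2 ι Q hQ hdisj hdisc
  have hQWG : ∀ i, Disjoint (W i ∩ G i)ᶜ (Q i) := fun i =>
    disjoint_compl_left_iff_subset.2 (subset_inter (hQW i) (hQG i))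
  choose f hf0 hf1 hf01 using fun i =>
    exists_continuous_zero_one_of_isClosed ((hWo i).inter (hG i)).isClosed_compl (hQ i) (hQWG i)
  have hsupp : ∀ i, Function.support (f i) ⊆ W i ∩ G i := fun i x hx => by
    by_contra hx'
    exact hx (hf0 i hx')
  exact ⟨f, hf1, fun i => (hsupp i).trans inter_subset_right, hf01,
    hWd.locallyFinite.subset fun i => (hsupp i).trans inter_subset_left⟩

theorem continuous_lp_infty_of_locallyFinite_support {X ι : Type*} [TopologicalSpace X]
    {Φ : X → lp (fun _ : ι => ℝ) ∞} (hΦ : ∀ i, Continuous fun x => Φ x i)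
    (hlf : LocallyFinite fun i => Function.support fun x => Φ x i) : Continuous Φ := by
  refine continuous_iff_continuousAt.2 fun x => Metric.tendsto_nhds.2 fun ε hε => ?_
  obtain ⟨U, hU, hfin⟩ := hlf x
  have hnear : ∀ᶠ y in 𝓝 x, ∀ i ∈ {i | (Function.support (fun x => Φ x i) ∩ U).Nonempty},
      dist (Φ y i) (Φ x i) < ε / 2 :=
    hfin.eventually_all.2 fun i _ =>
      Metric.tendsto_nhds.1 ((hΦ i).tendsto x) _ (half_pos hε)
  filter_upwards [hnear, hU] with y hy hyU
  refine ((dist_eq_norm _ _).trans_le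
    (lp.norm_le_of_forall_le (half_pos hε).le fun i => ?_)).trans_lt (half_lt_self hε)
  rw [lp.coeFn_sub, Pi.sub_apply, ← dist_eq_norm]
  by_cases hi : (Function.support (fun x => Φ x i) ∩ U).Nonempty
  · exact (hy i hi).le
  · have hzero : ∀ z ∈ U, Φ z i = 0 := fun z hz => by
      by_contra hz'
      exact hi ⟨z, hz', hz⟩
    simp [hzero y hyU, hzero x (mem_of_mem_nhds hU), (half_pos hε).le]

theorem TopologicalSpace.MetrizableSpace.inf_induced {X E : Type*} [tE : TopologicalSpace E]
    [hE : MetrizableSpace E] {s : TopologicalSpace X} (hs : @MetrizableSpace X s) (Φ : X → E) :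
    @MetrizableSpace X (s ⊓ tE.induced Φ) := by
  let tP : TopologicalSpace (X × E) := @instTopologicalSpaceProd X E s tE
  have hind : s ⊓ tE.induced Φ = tP.induced fun x => (x, Φ x) := by
    change _ = (induced Prod.fst s ⊓ induced Prod.snd tE).induced _
    rw [induced_inf, induced_compose, induced_compose]
    exact congrArg₂ _ (@induced_id _ s).symm rfl
  exact @Topology.IsEmbedding.metrizableSpace X (X × E) (s ⊓ tE.induced Φ) tP
    (@metrizableSpace_prod X E s tE hs hE) _
    (@Topology.IsEmbedding.mk _ _ (s ⊓ tE.induced Φ) tP _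
      (@Topology.IsInducing.mk _ _ (s ⊓ tE.induced Φ) tP _ hind) fun _ _ h => congrArg Prod.fst h)

theorem isClosed_and_locallyFiniteFamily_of_forall_nhds {X : Type*} [σ : TopologicalSpace X]
    {F : Set (Set X)} (hfin : ∀ x, {C ∈ F | x ∈ C}.Finite)
    (hN : ∀ x, ∃ N ∈ 𝓝 x, ∀ C ∈ F, (C ∩ N).Nonempty → x ∈ C) :
    (∀ C ∈ F, IsClosed C) ∧ LocallyFiniteFamily σ F := by
  choose N hN hNF using hN
  refine ⟨fun C hC => isClosed_iff_nhds.2 fun x hx => ?_, fun x => ⟨N x, hN x, ?_⟩⟩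
  · exact hNF x C hC ((hx _ (hN x)).mono fun _ h => ⟨h.2, h.1⟩)
  · exact (hfin x).subset fun C hC => ⟨hC.1, hNF x C hC.1 hC.2⟩

theorem exists_urysohn_functions_of_patterns {X : Type u} [t : TopologicalSpace X]
    (hcwn : CollectionwiseNormal X) {F : Set (Set X)} (hlf : LocallyFiniteFamily t F)
    (hcl : ∀ C ∈ F, IsClosed C) (hGδ : ∀ F' ⊆ F, IsGδ (⋃₀ F')) :
    ∃ f : ℕ → Iic F → C(X, ℝ), (∀ x, ∃ n, f n ⟨pattern F x, pattern_subset⟩ x = 1) ∧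
      (∀ n A, Function.support (f n A) ⊆ (⋃₀ (F \ A))ᶜ) ∧ (∀ n A x, f n A x ∈ Icc (0 : ℝ) 1) ∧
      ∀ n, LocallyFinite fun A => Function.support (f n A) := by
  choose V hVo hV using fun A : Set (Set X) => isGδ_iff_eq_iInter_nat.1 (hGδ (F \ A) sdiff_subset)
  have hVsub : ∀ n A, ⋃₀ (F \ A) ⊆ V A n := fun n A => (hV A).trans_subset (iInter_subset _ n)
  have hf : ∀ n, ∃ f : Iic F → C(X, ℝ),
      (∀ A, EqOn (f A) 1 (⋂₀ (A : Set (Set X)) \ V A n)) ∧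
      (∀ A, Function.support (f A) ⊆ (⋃₀ (F \ A))ᶜ) ∧ (∀ A x, f A x ∈ Icc (0 : ℝ) 1) ∧
      LocallyFinite fun A => Function.support (f A) := fun n =>
    hcwn.exists_locallyFinite_urysohn
      (fun A => (isClosed_sInter fun C hC => hcl C (A.2 hC)).sdiff (hVo A n))
      (pairwise_disjoint_sInter_diff (hVsub n))
      (discreteFamily_sInter_diff hlf hcl (hVo · n) (hVsub n))
      (fun A => (hlf.isClosed_sUnion hcl sdiff_subset).isOpen_compl)
      (fun A _ hy hyU => hy.2 (hVsub n A hyU))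
  choose f hf1 hfsupp hf01 hflf using hf
  refine ⟨f, fun x => ?_, hfsupp, hf01, hflf⟩
  have hx := notMem_sUnion_diff_pattern (F := F) (x := x)
  rw [hV, mem_iInter, not_forall] at hx
  obtain ⟨n, hn⟩ := hx
  exact ⟨n, hf1 n _ ⟨fun C hC => hC.2, hn⟩⟩

theorem exists_continuous_separating_map {X : Type u} [t : TopologicalSpace X]
    (hcwn : CollectionwiseNormal X) {F : Set (Set X)} (hlf : LocallyFiniteFamily t F)
    (hcl : ∀ C ∈ F, IsClosed C) (hGδ : ∀ F' ⊆ F, IsGδ (⋃₀ F')) :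
    ∃ Φ : X → ℕ → lp (fun _ : Iic F => ℝ) ∞, Continuous Φ ∧
      ∀ x, ∃ U ∈ 𝓝 (Φ x), ∀ C ∈ F, ∀ y ∈ C, Φ y ∈ U → x ∈ C := by
  obtain ⟨f, hf1, hfsupp, hf01, hflf⟩ := exists_urysohn_functions_of_patterns hcwn hlf hcl hGδ
  have hbdd : ∀ n x, BddAbove (range fun A => ‖f n A x‖) := fun n x =>
    ⟨1, by rintro _ ⟨A, rfl⟩; simpa [abs_of_nonneg (hf01 n A x).1] using (hf01 n A x).2⟩
  let Φ : X → ℕ → lp (fun _ : Iic F => ℝ) ∞ := fun x n =>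
    ⟨fun A => f n A x, memℓp_infty (hbdd n x)⟩
  refine ⟨Φ, continuous_pi fun n => continuous_lp_infty_of_locallyFinite_support
    (fun A => (f n A).continuous) (hflf n), fun x => ?_⟩
  obtain ⟨n, hxP⟩ := hf1 x
  set P : Iic F := ⟨pattern F x, pattern_subset⟩
  have hev : Continuous fun g : ℕ → lp (fun _ : Iic F => ℝ) ∞ => g n P :=
    (lp.lipschitzWith_one_eval ∞ P).continuous.comp (continuous_apply n)
  refine ⟨{g | 1 / 2 < g n P}, (isOpen_lt continuous_const hev).mem_nhds ?_,
    fun C hC y hyC hy => ?_⟩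
  · show 1 / 2 < f n P x
    norm_num [hxP]
  · have hy : (1 : ℝ) / 2 < f n P y := hy
    have hyP : y ∈ Function.support (f n P) := (one_half_pos.trans hy).ne'
    by_contra hxC
    exact hfsupp n P hyP ⟨C, ⟨hC, fun hCP => hxC hCP.2⟩, hyC⟩

theorem stmt1 {X : Type u} [t : TopologicalSpace X]
    (hcwn : CollectionwiseNormal X) (hsub : Submetrizable t)
    (𝓕 : Set (Set X)) (hlf : LocallyFiniteFamily t 𝓕)
    (hcl : ∀ C ∈ 𝓕, IsClosed C)
    (hGδ : ∀ 𝓕' ⊆ 𝓕, IsGδ (⋃₀ 𝓕')) :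
    ∃ σ : TopologicalSpace X, (∀ U, σ.IsOpen U → t.IsOpen U) ∧
      @TopologicalSpace.MetrizableSpace X σ ∧
      (∀ C ∈ 𝓕, @IsClosed X σ C) ∧ LocallyFiniteFamily σ 𝓕 := by
  obtain ⟨Φ, hΦ, hsep⟩ := exists_continuous_separating_map hcwn hlf hcl hGδ
  have hfin := hlf.finite_setOf_mem
  obtain ⟨s, hst, hs⟩ := hsub
  let σ := s ⊓ .induced Φ inferInstance
  have hΦσ : Continuous[σ, _] Φ := continuous_inf_dom_right (t₁ := s) continuous_induced_dom
  refine ⟨σ, le_inf hst (continuous_iff_le_induced.1 hΦ),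
    TopologicalSpace.MetrizableSpace.inf_induced hs Φ,
    isClosed_and_locallyFiniteFamily_of_forall_nhds (σ := σ) hfin fun x => ?_⟩
  obtain ⟨U, hU, hUF⟩ := hsep x
  exact ⟨Φ ⁻¹' U, hΦσ.continuousAt.preimage_mem_nhds hU,
    fun C hC ⟨y, hyC, hyU⟩ => hUF C hC y hyC hyU⟩
end

section
/- Let X be a submetrizable topological space, and let 𝓤 be a σ-discrete collection of cozero subsets of X (i.e., 𝓤 = ⋃_{n∈ℕ} 𝓤_n where each 𝓤_n is a discrete family). Then there exist a metrizable topological space M and a continuous injective map f : X → M such that f[U] is open in M for every U ∈ 𝓤. -/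
open Set Topology

/-- A (set-indexed) family of sets is discrete (w.r.t. an explicit topology `t`) if every point
has a neighborhood meeting at most one member of the family. -/
def DiscreteSetFamily {X : Type*} (t : TopologicalSpace X) (F : Set (Set X)) : Prop :=
  ∀ x : X, ∃ U ∈ @nhds X t x, {C ∈ F | (C ∩ U).Nonempty}.Subsingleton

/-- A cozero set: the preimage of `(0,1]` under a continuous function into `[0,1]`. -/
def IsCozero {X : Type*} [TopologicalSpace X] (U : Set X) : Prop :=
  ∃ g : X → ℝ, Continuous g ∧ range g ⊆ Icc 0 1 ∧ U = g ⁻¹' Ioc 0 1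

/-!
Fix a coarser metrizable topology `σ` and, for each `U ∈ 𝓤 n`, a continuous `g U : X → [0,1]`
with support `U`. Since `𝓤 n` is discrete, near each point at most one `g U` is nonzero, so
`Φ n : x ↦ (g U x)_{U ∈ 𝓤 n}` is continuous into `ℓ^∞(𝓤 n)`. Retopologize `X` by
`σ ⊓ ⨅ n, Φ n^*(ℓ^∞)`: it is coarser than the given topology, pseudometrizable (pulled back along
the diagonal into a countable product), T₀ because it refines `σ`, and every
`U = (Φ n)⁻¹ {h | h U ≠ 0}` is open in it. The identity of `X` is then the required map.
-/

open TopologicalSpace Function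
open scoped BoundedContinuousFunction

theorem pseudoMetrizableSpace_pi_of_countable {ι : Type*} [Countable ι] {A : ι → Type*}
    [∀ i, TopologicalSpace (A i)] [∀ i, PseudoMetrizableSpace (A i)] :
    PseudoMetrizableSpace (∀ i, A i) :=
  let := fun i => pseudoMetrizableSpaceUniformity (A i)
  have := fun i => pseudoMetrizableSpaceUniformity_countably_generated (A i)
  inferInstance

theorem pseudoMetrizableSpace_iInf {X ι : Type*} [Countable ι] (t : ι → TopologicalSpace X)
    (h : ∀ i, @PseudoMetrizableSpace X (t i)) : @PseudoMetrizableSpace X (⨅ i, t i) := by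
  let tPi : TopologicalSpace (ι → X) := @Pi.topologicalSpace ι (fun _ => X) t
  have hdiag : induced (fun x _ => x) tPi = ⨅ i, t i :=
    (@induced_to_pi ι (fun _ => X) t X _).trans (iInf_congr fun i => @induced_id X (t i))
  rw [← hdiag]
  exact @IsInducing.pseudoMetrizableSpace X (ι → X) (induced (fun x _ => x) tPi) tPi
    (@pseudoMetrizableSpace_pi_of_countable ι _ (fun _ => X) t h) _ (IsInducing.induced _)

theorem pseudoMetrizableSpace_induced {X Y : Type*} [TopologicalSpace Y] [PseudoMetrizableSpace Y]
    (f : X → Y) : @PseudoMetrizableSpace X (induced f ‹_›) :=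
  @IsInducing.pseudoMetrizableSpace X Y (induced f ‹_›) _ _ f (IsInducing.induced f)

theorem metrizableSpace_inf {X : Type*} {s t : TopologicalSpace X} (hs : @MetrizableSpace X s)
    (ht : @PseudoMetrizableSpace X t) : @MetrizableSpace X (s ⊓ t) :=
  have hpm : @PseudoMetrizableSpace X (s ⊓ t) := by
    rw [inf_eq_iInf]
    exact pseudoMetrizableSpace_iInf _ (Bool.rec ht hs.toPseudoMetrizableSpace)
  have hT0 : @T0Space X (s ⊓ t) := @t0Space_of_injective_of_continuous X X (s ⊓ t) s _
    injective_id (continuous_id_of_le inf_le_left) hs.toT0Space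
  @MetrizableSpace.mk X (s ⊓ t) hpm hT0

namespace BoundedContinuousFunction

theorem continuous_mkOfDiscrete_of_subsingleton_supports {X ι : Type*} [TopologicalSpace X]
    [TopologicalSpace ι] [DiscreteTopology ι] {g : ι → X → ℝ} (hg : ∀ i, Continuous (g i))
    {C : ℝ} (hC : ∀ x i j, dist (g i x) (g j x) ≤ C)
    (hdisc : ∀ x, ∃ W ∈ 𝓝 x, {i | (support (g i) ∩ W).Nonempty}.Subsingleton) :
    Continuous fun x => mkOfDiscrete (g · x) C (hC x) := by
  refine continuous_iff_continuousAt.2 fun x => ?_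
  obtain ⟨W, hW, hsub⟩ := hdisc x
  have hzero : ∀ i ∉ {i | (support (g i) ∩ W).Nonempty}, ∀ y ∈ W, g i y = 0 :=
    fun i hi y hy => by_contra fun h => hi ⟨y, h, hy⟩
  rcases hsub.eq_empty_or_singleton with hempty | ⟨i₀, hi₀⟩
  · refine tendsto_nhds_of_eventually_eq (Filter.mem_of_superset hW fun y hy => ?_)
    ext i
    have hi : i ∉ {i | (support (g i) ∩ W).Nonempty} := hempty ▸ notMem_empty i
    exact (hzero i hi y hy).trans (hzero i hi x (mem_of_mem_nhds hW)).symm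
  · have hle : ∀ y ∈ W, dist (mkOfDiscrete (g · y) C (hC y)) (mkOfDiscrete (g · x) C (hC x)) ≤
        dist (g i₀ y) (g i₀ x) := by
      refine fun y hy => (dist_le dist_nonneg).2 fun i => ?_
      by_cases hi : i = i₀
      · subst hi; exact le_rfl
      · have hi' : i ∉ {i | (support (g i) ∩ W).Nonempty} := hi₀ ▸ hi
        simp only [mkOfDiscrete_apply, hzero i hi' y hy,
          hzero i hi' x (mem_of_mem_nhds hW), dist_self, dist_nonneg]
    exact tendsto_iff_dist_tendsto_zero.2 <| squeeze_zero' (.of_forall fun _ => dist_nonneg)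
      (Filter.mem_of_superset hW hle) (tendsto_iff_dist_tendsto_zero.1 (hg i₀).continuousAt)

end BoundedContinuousFunction

theorem IsCozero.exists_support_eq {X : Type*} [TopologicalSpace X] {U : Set X}
    (hU : IsCozero U) : ∃ g : X → ℝ, Continuous g ∧ (∀ x, g x ∈ Icc 0 1) ∧ support g = U := by
  obtain ⟨g, hgc, hrange, rfl⟩ := hU
  refine ⟨g, hgc, fun x => hrange ⟨x, rfl⟩, ext fun x => ?_⟩
  have hx : g x ∈ Icc 0 1 := hrange ⟨x, rfl⟩
  exact ⟨fun h => ⟨lt_of_le_of_ne hx.1 (Ne.symm h), hx.2⟩, fun h => h.1.ne'⟩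

theorem stmt2 {X : Type u} [tX : TopologicalSpace X] (hX : Submetrizable tX)
    (𝓤 : ℕ → Set (Set X))
    (hdisc : ∀ n, DiscreteSetFamily tX (𝓤 n))
    (hcoz : ∀ n, ∀ U ∈ 𝓤 n, IsCozero U) :
    ∃ (M : Type u) (tM : TopologicalSpace M), @TopologicalSpace.MetrizableSpace M tM ∧
      ∃ f : X → M, @Continuous X M tX tM f ∧ Function.Injective f ∧
        ∀ U ∈ ⋃ n, 𝓤 n, @IsOpen M tM (f '' U) := by
  choose! g hgc hg01 hsupp using fun n U (hU : U ∈ 𝓤 n) => (hcoz n U hU).exists_support_eq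
  let _ (n : ℕ) : TopologicalSpace (𝓤 n) := ⊥
  have _ (n : ℕ) : DiscreteTopology (𝓤 n) := ⟨rfl⟩
  let Φ (n : ℕ) (x : X) : 𝓤 n →ᵇ ℝ := .mkOfDiscrete (fun U => g n U x) 1 fun U V =>
    Real.dist_le_of_mem_Icc_01 (hg01 n U U.2 x) (hg01 n V V.2 x)
  have hΦ (n : ℕ) : Continuous (Φ n) := by
    refine BoundedContinuousFunction.continuous_mkOfDiscrete_of_subsingleton_supports
      (g := fun U : 𝓤 n => g n U) (fun U => hgc n U U.2) _ fun x => ?_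
    obtain ⟨W, hW, hsub⟩ := hdisc n x
    refine ⟨W, hW, fun U hU V hV => Subtype.ext (hsub ⟨U.2, ?_⟩ ⟨V.2, ?_⟩)⟩
    · rwa [← hsupp n U U.2]
    · rwa [← hsupp n V V.2]
  -- Destructured only now: `σ` becomes a local instance on `X`, competing with `tX`.
  obtain ⟨σ, hσ, hσm⟩ := hX
  refine ⟨X, σ ⊓ ⨅ n, induced (Φ n) inferInstance,
    metrizableSpace_inf hσm (pseudoMetrizableSpace_iInf _ fun n => pseudoMetrizableSpace_induced _),
    id, continuous_id_of_le (le_inf hσ (le_iInf fun n => (hΦ n).le_induced)), injective_id, ?_⟩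
  rintro U hU
  obtain ⟨n, hUn⟩ := mem_iUnion.1 hU
  have hpre : Φ n ⁻¹' {h | h ⟨U, hUn⟩ ≠ 0} = U := hsupp n U hUn
  rw [image_id]
  exact (inf_le_right.trans (iInf_le _ n) : _ ≤ induced (Φ n) _) U
    ⟨_, isOpen_ne_fun (continuous_eval_const _) continuous_const, hpre⟩
end

section
/- Let B ⊆ ℝ be a Bernstein set. Then for all real numbers a < b, the set (a,b) ∩ ℚ is not a Gδ set in the subspace ℚ ∪ B of ℝ with the Euclidean topology. -/
open Set Topology

/-- The rationals, as a subset of `ℝ`. -/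
def ratSet : Set ℝ := Set.range (fun q : ℚ => (q : ℝ))

/-- A Bernstein set: every uncountable closed subset of `ℝ` meets both it and its complement. -/
def IsBernstein (B : Set ℝ) : Prop :=
  ∀ C : Set ℝ, IsClosed C → ¬C.Countable → (C ∩ B).Nonempty ∧ (C ∩ Bᶜ).Nonempty

lemma uncountable_cantor : Uncountable (ℕ → Bool) := by
  refine not_countable_iff.mp ?_
  intro h
  have hle := Cardinal.mk_le_aleph0 (α := ℕ → Bool)
  rw [Cardinal.mk_arrow, Cardinal.mk_bool, Cardinal.mk_nat] at hle
  simp only [Cardinal.lift_id, Cardinal.lift_aleph0, Cardinal.lift_ofNat] at hle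
  exact absurd hle (Cardinal.cantor Cardinal.aleph0).not_ge

lemma exists_closed_uncountable_subset {E : Set ℝ} (hE : MeasurableSet E)
    (hunc : ¬E.Countable) : ∃ C : Set ℝ, IsClosed C ∧ ¬C.Countable ∧ C ⊆ E := by
  have key : ∃ f : (ℕ → Bool) → ℝ, range f ⊆ E ∧ Continuous f ∧ Function.Injective f := by
    obtain ⟨t', htle, htp, htc, -⟩ := hE.isClopenable
    obtain ⟨f, hfr, hfc, hfi⟩ :=
      @IsClosed.exists_nat_bool_injection_of_not_countable ℝ t' htp E htc hunc
    exact ⟨f, hfr, continuous_le_rng htle hfc, hfi⟩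
  obtain ⟨f, hfr, hfc', hfi⟩ := key
  refine ⟨Set.range f, (isCompact_range hfc').isClosed, ?_, hfr⟩
  intro h
  haveI := h.to_subtype
  haveI := uncountable_cantor
  exact not_countable (Countable.of_equiv _ (Equiv.ofInjective f hfi).symm)

lemma dense_aux {a b : ℝ} {V : Set ℝ} (hV : Ioo a b ∩ ratSet ⊆ V) :
    Dense (V ∪ (Icc a b)ᶜ) := by
  have h1 : Dense ((Ioo a b ∩ ratSet) ∪ (Icc a b)ᶜ) := by
    intro x
    by_cases hx : x ∈ Ioo a b
    · have hIoo : Ioo a b ⊆ closure (Ioo a b ∩ ratSet) :=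
        Dense.open_subset_closure_inter Rat.denseRange_cast isOpen_Ioo
      exact closure_mono subset_union_left (hIoo hx)
    · have hx' : x ≤ a ∨ b ≤ x := by
        rcases mem_Ioo.not.mp hx |> not_and_or.mp with h | h
        · exact Or.inl (not_lt.mp h)
        · exact Or.inr (not_lt.mp h)
      have hsub : x ∈ closure ((Icc a b)ᶜ) := by
        rcases hx' with h | h
        · have : x ∈ closure (Iio a) := by rw [closure_Iio]; exact h
          refine closure_mono ?_ this
          intro y hy hyI
          exact absurd hyI.1 (not_le.mpr hy)
        · have : x ∈ closure (Ioi b) := by rw [closure_Ioi]; exact h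
          refine closure_mono ?_ this
          intro y hy hyI
          exact absurd hyI.2 (not_le.mpr hy)
      exact closure_mono subset_union_right hsub
  exact h1.mono (union_subset_union_left _ hV)

theorem stmt4 (B : Set ℝ) (hB : IsBernstein B) (a b : ℝ) (hab : a < b) :
    ¬ IsGδ ((Subtype.val : ↥(ratSet ∪ B) → ℝ) ⁻¹' (Set.Ioo a b ∩ ratSet)) := by
  intro hGδ
  obtain ⟨T, hTo, hTc, hST⟩ := hGδ
  have hVex : ∀ t ∈ T, ∃ U : Set ℝ, IsOpen U ∧ Subtype.val ⁻¹' U = t := by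
    intro t ht
    have := hTo t ht
    rwa [isOpen_induced_iff] at this
  choose! V hVopen hVpre using hVex
  have hmem : ∀ x : ↥(ratSet ∪ B),
      ((x : ℝ) ∈ Ioo a b ∩ ratSet) ↔ ∀ t ∈ T, (x : ℝ) ∈ V t := by
    intro x
    constructor
    · intro hx t ht
      have hxS : x ∈ Subtype.val ⁻¹' (Ioo a b ∩ ratSet) := hx
      rw [hST] at hxS
      have hxt := hxS t ht
      rw [← hVpre t ht] at hxt
      exact hxt
    · intro h
      have hxS : x ∈ ⋂₀ T := by
        intro t ht
        rw [← hVpre t ht]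
        exact h t ht
      rw [← hST] at hxS
      exact hxS
  set E : Set ℝ := Ioo a b ∩ ratSetᶜ ∩ ⋂₀ (V '' T) with hEdef
  have hsubV : ∀ t ∈ T, Ioo a b ∩ ratSet ⊆ V t := by
    intro t ht x hx
    exact (hmem ⟨x, Or.inl hx.2⟩).mp hx t ht
  have hEB : ∀ x ∈ E, x ∉ B := by
    intro x hxE hxB
    have hx' : ((⟨x, Or.inr hxB⟩ : ↥(ratSet ∪ B)) : ℝ) ∈ Ioo a b ∩ ratSet := by
      refine (hmem _).mpr ?_
      intro t ht
      exact hxE.2 (V t) (mem_image_of_mem _ ht)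
    exact hxE.1.2 hx'.2
  have hEunc : ¬E.Countable := by
    intro hEc
    set W : Set (Set ℝ) :=
      ((fun t => V t ∪ (Icc a b)ᶜ) '' T) ∪ ((fun x : ℝ => ({x}ᶜ : Set ℝ)) '' (E ∪ ratSet))
        with hWdef
    have hWc : W.Countable :=
      (hTc.image _).union ((hEc.union (countable_range _)).image _)
    have hWo : ∀ s ∈ W, IsOpen s := by
      rintro s (⟨t, ht, rfl⟩ | ⟨x, hx, rfl⟩)
      · exact (hVopen t ht).union isClosed_Icc.isOpen_compl
      · exact isOpen_compl_singleton
    have hWd : ∀ s ∈ W, Dense s := by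
      rintro s (⟨t, ht, rfl⟩ | ⟨x, hx, rfl⟩)
      · exact dense_aux (hsubV t ht)
      · exact dense_compl_singleton x
    have hdense : Dense (⋂₀ W) := dense_sInter_of_isOpen hWo hWc hWd
    obtain ⟨y, hyI, hyW⟩ :=
      hdense.inter_open_nonempty _ isOpen_Ioo (nonempty_Ioo.mpr hab)
    have hynotE : y ∉ E := by
      intro hyE
      have : y ∈ ({y}ᶜ : Set ℝ) :=
        hyW _ (Or.inr ⟨y, Or.inl hyE, rfl⟩)
      exact this rfl
    have hynotQ : y ∉ ratSet := by
      intro hyQ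
      have : y ∈ ({y}ᶜ : Set ℝ) :=
        hyW _ (Or.inr ⟨y, Or.inr hyQ, rfl⟩)
      exact this rfl
    refine hynotE ⟨⟨hyI, hynotQ⟩, ?_⟩
    rintro s ⟨t, ht, rfl⟩
    have hy' := hyW _ (Or.inl ⟨t, ht, rfl⟩)
    rcases hy' with h | h
    · exact h
    · exact absurd (mem_Icc_of_Ioo hyI) h
  have hEm : MeasurableSet E := by
    refine (measurableSet_Ioo.inter (countable_range _).measurableSet.compl).inter ?_
    refine MeasurableSet.sInter (hTc.image V) ?_
    rintro s ⟨t, ht, rfl⟩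
    exact (hVopen t ht).measurableSet
  obtain ⟨C, hCcl, hCunc, hCE⟩ := exists_closed_uncountable_subset hEm hEunc
  obtain ⟨⟨x, hxC, hxB⟩, -⟩ := hB C hCcl hCunc
  exact hEB x (hCE hxC) hxB
end

section
/- Let a < b be real numbers and let K ⊆ ℝ be a Gδ subset of ℝ that is dense in the open interval (a,b). Then there exists an uncountable set P ⊆ K ∩ (a,b) that is closed in ℝ. -/
open Set Topology

/-- The intersection `K ∩ (a,b)` is not countable: Baire category argument. -/
theorem stmt6_aux (a b : ℝ) (hab : a < b) (K : Set ℝ) (hK : IsGδ K)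
    (hdense : Set.Ioo a b ⊆ closure K) : ¬(K ∩ Set.Ioo a b).Countable := by
  intro hcount
  set C : Set ℝ := K ∩ Set.Ioo a b with hC
  -- C is Gδ and dense in (a,b); D := C ∪ (Ioo a b)ᶜ is a dense Gδ in ℝ
  have hCGδ : IsGδ C := hK.inter isOpen_Ioo.isGδ
  have hDGδ : IsGδ (C ∪ (Set.Ioo a b)ᶜ) :=
    hCGδ.union isOpen_Ioo.isClosed_compl.isGδ
  have hIooC : Set.Ioo a b ⊆ closure C := by
    intro x hx
    have : x ∈ Set.Ioo a b ∩ closure K := ⟨hx, hdense hx⟩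
    have := isOpen_Ioo.inter_closure this
    exact closure_mono (by rw [hC, Set.inter_comm]) this
  have hDdense : Dense (C ∪ (Set.Ioo a b)ᶜ) := by
    intro x
    by_cases hx : x ∈ Set.Ioo a b
    · exact closure_mono Set.subset_union_left (hIooC hx)
    · exact subset_closure (Or.inr hx)
  have hDres : (C ∪ (Set.Ioo a b)ᶜ) ∈ residual ℝ :=
    mem_residual.2 ⟨_, subset_rfl, hDGδ, hDdense⟩
  -- Cᶜ is residual since C is countable
  have hCcres : Cᶜ ∈ residual ℝ := by
    have : Cᶜ = ⋂ x ∈ C, ({x}ᶜ : Set ℝ) := by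
      rw [← Set.compl_iUnion₂, Set.biUnion_of_singleton]
    rw [this]
    exact (countable_bInter_mem hcount).2 fun x _ =>
      residual_of_dense_open isOpen_compl_singleton (dense_compl_singleton x)
  have hres : ((C ∪ (Set.Ioo a b)ᶜ) ∩ Cᶜ) ∈ residual ℝ :=
    Filter.inter_mem hDres hCcres
  have hsub : (C ∪ (Set.Ioo a b)ᶜ) ∩ Cᶜ ⊆ (Set.Ioo a b)ᶜ := by
    rintro x ⟨hx | hx, hxc⟩
    · exact absurd hx hxc
    · exact hx
  have hdense' : Dense ((Set.Ioo a b)ᶜ : Set ℝ) :=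
    (dense_of_mem_residual hres).mono hsub
  have hx : ((a + b) / 2) ∈ Set.Ioo a b := ⟨by linarith, by linarith⟩
  have : ((a + b) / 2) ∈ (Set.Ioo a b)ᶜ := by
    rw [← isOpen_Ioo.isClosed_compl.closure_eq]
    exact hdense' _
  exact this hx

theorem stmt6 (a b : ℝ) (hab : a < b) (K : Set ℝ) (hK : IsGδ K)
    (hdense : Set.Ioo a b ⊆ closure K) :
    ∃ P : Set ℝ, P ⊆ K ∩ Set.Ioo a b ∧ ¬P.Countable ∧ IsClosed P := by
  set C : Set ℝ := K ∩ Set.Ioo a b with hC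
  have hCGδ : IsGδ C := hK.inter isOpen_Ioo.isGδ
  have huncount : ¬C.Countable := stmt6_aux a b hab K hK hdense
  -- find a finer Polish topology on ℝ making C closed
  obtain ⟨f, hfC, hfcont', hfinj⟩ :
      ∃ f : (ℕ → Bool) → ℝ, Set.range f ⊆ C ∧ Continuous f ∧ Function.Injective f := by
    obtain ⟨t', t'le, t'polish, hclosed, -⟩ :=
      (MeasureTheory.isClopenable_iff_measurableSet (γ := ℝ)).2 hCGδ.measurableSet
    obtain ⟨f, hfC, hfcont, hfinj⟩ :=
      @IsClosed.exists_nat_bool_injection_of_not_countable ℝ t' t'polish C hclosed huncount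
    refine ⟨f, hfC, ?_, hfinj⟩
    rw [continuous_iff_coinduced_le] at hfcont ⊢
    exact le_trans hfcont t'le
  refine ⟨Set.range f, hfC, ?_, (isCompact_range hfcont').isClosed⟩
  intro hcount
  have : (f ⁻¹' Set.range f).Countable := hcount.preimage hfinj
  rw [Set.preimage_range] at this
  have hcnt : Countable (ℕ → Bool) := Set.countable_univ_iff.1 this
  obtain ⟨g, hg⟩ := exists_injective_nat (ℕ → Bool)
  have hχ : Function.Injective (fun s : Set ℕ => fun n => @decide (n ∈ s) (Classical.dec _)) := by
    intro s t hst
    ext n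
    simpa using congrFun hst n
  exact Function.cantor_injective _ (hg.comp hχ)
end

section
/- Let B₀ and B₁ be disjoint subsets of ℝ with B₀ ∪ B₁ = ℝ \ ℚ. Let X := ({0,1} × ℝ) \ ({0} × B₁ ∪ {1} × B₀), equipped with the subspace topology induced from the product of the two-point discrete space {0,1} with the Michael line 𝕄. Then the restriction to X of the projection {0,1} × ℝ → ℝ, viewed as a map f : X → 𝕄, is a perfect surjective map. -/
open Set Topology

/-- The Michael line: `ℝ` with the topology generated by the base
`{U ∪ K : U Euclidean-open, K ⊆ irrationals}`. -/
def michaelLine : TopologicalSpace ℝ :=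
  TopologicalSpace.generateFrom
    {S | ∃ U K : Set ℝ, IsOpen U ∧ K ⊆ {x : ℝ | Irrational x} ∧ S = U ∪ K}

lemma michael_basic {U K : Set ℝ} (hU : IsOpen U) (hK : K ⊆ {x : ℝ | Irrational x}) :
    IsOpen[michaelLine] (U ∪ K) :=
  TopologicalSpace.isOpen_generateFrom_of_mem ⟨U, K, hU, hK, rfl⟩

lemma michael_isOpen {S : Set ℝ} (h : IsOpen[michaelLine] S) :
    ∃ U K : Set ℝ, IsOpen U ∧ K ⊆ {x : ℝ | Irrational x} ∧ S = U ∪ K := by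
  have h' : TopologicalSpace.GenerateOpen
      {S | ∃ U K : Set ℝ, IsOpen U ∧ K ⊆ {x : ℝ | Irrational x} ∧ S = U ∪ K} S := h
  clear h
  induction h' with
  | basic s hs => exact hs
  | univ => exact ⟨univ, ∅, isOpen_univ, empty_subset _, (union_empty _).symm⟩
  | inter s t _ _ ihs iht =>
    obtain ⟨U, K, hU, hK, rfl⟩ := ihs
    obtain ⟨U', K', hU', hK', rfl⟩ := iht
    refine ⟨U ∩ U', (U ∩ K') ∪ (K ∩ U') ∪ (K ∩ K'), hU.inter hU', ?_, ?_⟩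
    · intro x hx
      rcases hx with (⟨_, hx⟩ | ⟨hx, _⟩) | ⟨hx, _⟩
      exacts [hK' hx, hK hx, hK hx]
    · ext x
      simp only [mem_inter_iff, mem_union]
      tauto
  | sUnion s _ ih =>
    choose U K hU hK hEq using ih
    refine ⟨⋃ t, ⋃ ht : t ∈ s, U t ht, ⋃ t, ⋃ ht : t ∈ s, K t ht,
      isOpen_iUnion fun t => isOpen_iUnion fun ht => hU t ht,
      iUnion_subset fun t => iUnion_subset fun ht => hK t ht, ?_⟩
    ext x
    simp only [mem_sUnion, mem_union, mem_iUnion]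
    constructor
    · rintro ⟨t, ht, hx⟩
      rw [hEq t ht] at hx
      rcases hx with hx | hx
      · exact Or.inl ⟨t, ht, hx⟩
      · exact Or.inr ⟨t, ht, hx⟩
    · rintro (⟨t, ht, hx⟩ | ⟨t, ht, hx⟩)
      · exact ⟨t, ht, (hEq t ht) ▸ Or.inl hx⟩
      · exact ⟨t, ht, (hEq t ht) ▸ Or.inr hx⟩

/-- A map is perfect (w.r.t. explicit topologies) if it is continuous, closed, and has
compact fibers. -/
def IsPerfectMap {X Y : Type*} (tX : TopologicalSpace X) (tY : TopologicalSpace Y)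
    (f : X → Y) : Prop :=
  @Continuous X Y tX tY f ∧ @IsClosedMap X Y tX tY f ∧ ∀ y : Y, @IsCompact X tX (f ⁻¹' {y})

/-- The product of the two-point discrete space `Fin 2` with the Michael line. -/
def prodMichael : TopologicalSpace (Fin 2 × ℝ) :=
  @instTopologicalSpaceProd (Fin 2) ℝ inferInstance michaelLine

theorem stmt7 (B₀ B₁ : Set ℝ) (hdisj : Disjoint B₀ B₁)
    (hunion : B₀ ∪ B₁ = {x : ℝ | Irrational x})
    (X : Set (Fin 2 × ℝ))
    (hX : X = (({0} : Set (Fin 2)) ×ˢ B₁ ∪ ({1} : Set (Fin 2)) ×ˢ B₀)ᶜ)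
    (f : ↥X → ℝ) (hf : ∀ p : ↥X, f p = (p : Fin 2 × ℝ).2) :
    IsPerfectMap (TopologicalSpace.induced (Subtype.val : ↥X → Fin 2 × ℝ) prodMichael)
        michaelLine f ∧
    Function.Surjective f := by
  set tX := TopologicalSpace.induced (Subtype.val : ↥X → Fin 2 × ℝ) prodMichael with htX
  -- every i : Fin 2 is 0 or 1
  have hfin2 : ∀ i : Fin 2, i = 0 ∨ i = 1 := by decide
  -- rational points: both copies in X
  have hrat : ∀ y : ℝ, ¬ Irrational y → ∀ i : Fin 2, (i, y) ∈ X := by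
    intro y hy i
    rw [hX]
    intro hmem
    rcases hmem with ⟨_, h⟩ | ⟨_, h⟩
    · have h2 : y ∈ B₀ ∪ B₁ := Or.inr h
      rw [hunion] at h2
      exact hy h2
    · have h2 : y ∈ B₀ ∪ B₁ := Or.inl h
      rw [hunion] at h2
      exact hy h2
  -- surjectivity
  have hsurj : Function.Surjective f := by
    intro y
    by_cases hy : y ∈ B₁
    · have hX1 : ((1 : Fin 2), y) ∈ X := by
        rw [hX]
        rintro (⟨h1, _⟩ | ⟨_, h0⟩)
        · exact absurd (show (1 : Fin 2) = 0 from h1) (by decide)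
        · exact (hdisj.ne_of_mem h0 hy rfl)
      exact ⟨⟨(1, y), hX1⟩, hf _⟩
    · have hX0 : ((0 : Fin 2), y) ∈ X := by
        rw [hX]
        rintro (⟨_, h1⟩ | ⟨h0, _⟩)
        · exact hy h1
        · exact absurd (show (0 : Fin 2) = 1 from h0) (by decide)
      exact ⟨⟨(0, y), hX0⟩, hf _⟩
  refine ⟨⟨?_, ?_, ?_⟩, hsurj⟩
  · -- continuity
    have : f = (Prod.snd : Fin 2 × ℝ → ℝ) ∘ (Subtype.val : ↥X → Fin 2 × ℝ) := funext hf
    rw [this]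
    have h1 : @Continuous (↥X) (Fin 2 × ℝ) tX prodMichael Subtype.val :=
      @continuous_induced_dom (↥X) (Fin 2 × ℝ) Subtype.val prodMichael
    have h2 : @Continuous (Fin 2 × ℝ) ℝ prodMichael michaelLine Prod.snd := by
      unfold prodMichael
      exact @continuous_snd (Fin 2) ℝ _ michaelLine
    exact @Continuous.comp _ _ _ tX prodMichael michaelLine _ _ h2 h1
  · -- closed map
    intro C hC
    refine @IsClosed.mk ℝ michaelLine (f '' C) ?_
    -- Cᶜ is open in the induced topology
    have hCc : IsOpen[tX] Cᶜ := hC.isOpen_compl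
    obtain ⟨O, hO, hOC⟩ := (@isOpen_induced_iff _ _ prodMichael _ _).mp hCc
    -- key: for rational y not in image, euclidean nbhd disjoint from image
    have key : ∀ y : ℝ, ¬ Irrational y → y ∉ f '' C →
        ∃ U : Set ℝ, IsOpen U ∧ y ∈ U ∧ U ∩ f '' C = ∅ := by
      intro y hy hyC
      have hpt : ∀ i : Fin 2, ∃ Ui : Set ℝ, IsOpen Ui ∧ y ∈ Ui ∧
          ({i} : Set (Fin 2)) ×ˢ Ui ⊆ O := by
        intro i
        have hmemX : (i, y) ∈ X := hrat y hy i
        have hmemO : (i, y) ∈ O := by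
          have : (⟨(i, y), hmemX⟩ : ↥X) ∈ Cᶜ := by
            intro hmc
            exact hyC ⟨⟨(i, y), hmemX⟩, hmc, hf _⟩
          rw [← hOC] at this
          exact this
        obtain ⟨u, v, hu, hv, hiu, hyv, huv⟩ :=
          (@isOpen_prod_iff (Fin 2) ℝ _ michaelLine O).mp hO i y hmemO
        obtain ⟨U, K, hU, hK, rfl⟩ := michael_isOpen hv
        have hyU : y ∈ U := by
          rcases hyv with h | h
          · exact h
          · exact absurd (hK h) hy
        refine ⟨U, hU, hyU, ?_⟩
        intro p hp
        have hp1 : p.1 = i := hp.1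
        exact huv ⟨hp1 ▸ hiu, Or.inl hp.2⟩
      obtain ⟨U0, hU0, hyU0, hsub0⟩ := hpt 0
      obtain ⟨U1, hU1, hyU1, hsub1⟩ := hpt 1
      refine ⟨U0 ∩ U1, hU0.inter hU1, ⟨hyU0, hyU1⟩, ?_⟩
      ext x
      simp only [mem_inter_iff, mem_empty_iff_false, iff_false]
      rintro ⟨⟨hx0, hx1⟩, ⟨p, hpC, hpx⟩⟩
      have hpval : (p : Fin 2 × ℝ).2 = x := by rw [← hf p, hpx]
      have hpO : (p : Fin 2 × ℝ) ∈ O := by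
        rcases hfin2 (p : Fin 2 × ℝ).1 with h | h
        · exact hsub0 ⟨by simp [h], hpval ▸ hx0⟩
        · exact hsub1 ⟨by simp [h], hpval ▸ hx1⟩
      have : p ∈ Cᶜ := by rw [← hOC]; exact hpO
      exact this hpC
    choose U hUo hUy hUd using key
    have hdecomp : (f '' C)ᶜ =
        (⋃ y, ⋃ h1 : ¬ Irrational y, ⋃ h2 : y ∉ f '' C, U y h1 h2) ∪
        ((f '' C)ᶜ ∩ {x : ℝ | Irrational x}) := by
      ext x
      simp only [mem_union, mem_iUnion, mem_inter_iff, mem_compl_iff, mem_setOf_eq]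
      constructor
      · intro hx
        by_cases hirr : Irrational x
        · exact Or.inr ⟨hx, hirr⟩
        · exact Or.inl ⟨x, hirr, hx, hUy x hirr hx⟩
      · rintro (⟨y, h1, h2, hx⟩ | ⟨hx, _⟩)
        · intro hmem
          have : x ∈ U y h1 h2 ∩ f '' C := ⟨hx, hmem⟩
          rw [hUd y h1 h2] at this
          exact this
        · exact hx
    rw [hdecomp]
    exact michael_basic
      (isOpen_iUnion fun y => isOpen_iUnion fun h1 => isOpen_iUnion fun h2 => hUo y h1 h2)
      (inter_subset_right)
  · -- compact fibers
    intro y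
    have hsub : f ⁻¹' {y} ⊆ (Subtype.val : ↥X → Fin 2 × ℝ) ⁻¹' {((0 : Fin 2), y), ((1 : Fin 2), y)} := by
      intro p hp
      have hpy : (p : Fin 2 × ℝ).2 = y := by rw [← hf p]; exact hp
      rcases hfin2 (p : Fin 2 × ℝ).1 with h | h
      · left; exact Prod.ext h hpy
      · right; exact Prod.ext h hpy
    have hfin : (f ⁻¹' {y}).Finite :=
      Set.Finite.subset (Set.Finite.preimage (Subtype.val_injective.injOn)
        (Set.toFinite _)) hsub
    exact @Set.Finite.isCompact _ tX _ hfin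
end

section
/- Let B₀ and B₁ be disjoint Bernstein sets with B₀ ∪ B₁ = ℝ \ ℚ. Let X := ({0,1} × ℝ) \ ({0} × B₁ ∪ {1} × B₀), equipped with the subspace topology τ_X induced from the product of the two-point discrete space {0,1} with the Michael line 𝕄, and let f : X → 𝕄 be the restriction to X of the projection onto the second coordinate. Then there do NOT exist a topology σ_X ⊆ τ_X on X with (X, σ_X) metrizable and a topology σ_Y ⊆ τ_𝕄 on ℝ with (ℝ, σ_Y) metrizable such that f : (X, σ_X) → (ℝ, σ_Y) is a perfect map. -/
open Set Topology

/-- In the Michael line, every open set is a Euclidean neighborhood of each of its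
rational points. -/
lemma michael_rat_nbhd {S : Set ℝ} (hS : michaelLine.IsOpen S) :
    ∀ q ∈ S, ¬Irrational q → ∃ ε > 0, ∀ y : ℝ, |y - q| < ε → y ∈ S := by
  have hS' : TopologicalSpace.GenerateOpen
      {S | ∃ U K : Set ℝ, IsOpen U ∧ K ⊆ {x : ℝ | Irrational x} ∧ S = U ∪ K} S := hS
  clear hS
  induction hS' with
  | basic S hSmem =>
    rintro q hq hqrat
    obtain ⟨U, K, hU, hK, rfl⟩ := hSmem
    have hqU : q ∈ U := by
      rcases hq with h | h
      · exact h
      · exact absurd (hK h) hqrat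
    obtain ⟨ε, hε, hball⟩ := Metric.isOpen_iff.mp hU q hqU
    refine ⟨ε, hε, fun y hy => Or.inl (hball ?_)⟩
    rwa [Metric.mem_ball, Real.dist_eq]
  | univ => exact fun q _ _ => ⟨1, one_pos, fun y _ => mem_univ y⟩
  | inter S T _ _ ihS ihT =>
    intro q hq hqrat
    obtain ⟨ε₁, hε₁, h₁⟩ := ihS q hq.1 hqrat
    obtain ⟨ε₂, hε₂, h₂⟩ := ihT q hq.2 hqrat
    exact ⟨min ε₁ ε₂, lt_min hε₁ hε₂,
      fun y hy => ⟨h₁ y (hy.trans_le (min_le_left _ _)), h₂ y (hy.trans_le (min_le_right _ _))⟩⟩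
  | sUnion 𝒮 _ ih =>
    intro q hq hqrat
    obtain ⟨t, ht𝒮, hqt⟩ := hq
    obtain ⟨ε, hε, h⟩ := ih t ht𝒮 q hqt hqrat
    exact ⟨ε, hε, fun y hy => ⟨t, ht𝒮, h y hy⟩⟩

/-- Horizontal sections of open sets in `Fin 2 × 𝕄` are Euclidean neighborhoods of their
rational points. -/
lemma prodMichael_rat_nbhd {W : Set (Fin 2 × ℝ)} (hW : prodMichael.IsOpen W) (i : Fin 2)
    {q : ℝ} (hq : ¬Irrational q) (hmem : (i, q) ∈ W) :
    ∃ ε > 0, ∀ y : ℝ, |y - q| < ε → (i, y) ∈ W := by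
  have hcont : @Continuous ℝ (Fin 2 × ℝ) michaelLine prodMichael (fun y => (i, y)) := by
    refine @Continuous.prodMk (Fin 2) ℝ ℝ _ michaelLine michaelLine _ _
      (@continuous_const ℝ (Fin 2) michaelLine _ i) (@continuous_id ℝ michaelLine)
  have hopen : michaelLine.IsOpen ((fun y : ℝ => (i, y)) ⁻¹' W) :=
    @IsOpen.preimage ℝ (Fin 2 × ℝ) michaelLine prodMichael _ hcont W hW
  exact michael_rat_nbhd hopen q hmem hq

/-- In a metrizable space, two distinct points have open neighborhoods with disjoint closures. -/
lemma exists_disjoint_closures {Z : Type*} (σ : TopologicalSpace Z)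
    (hm : @TopologicalSpace.MetrizableSpace Z σ) {a b : Z} (hab : a ≠ b) :
    ∃ Va Vb : Set Z, σ.IsOpen Va ∧ σ.IsOpen Vb ∧ a ∈ Va ∧ b ∈ Vb ∧
      Disjoint (@closure Z σ Va) (@closure Z σ Vb) := by
  letI := σ
  haveI := hm
  letI : MetricSpace Z := TopologicalSpace.metrizableSpaceMetric Z
  have hd : 0 < dist a b := dist_pos.mpr hab
  set ε := dist a b / 3 with hε
  have hεpos : 0 < ε := by positivity
  refine ⟨Metric.ball a ε, Metric.ball b ε, Metric.isOpen_ball, Metric.isOpen_ball,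
    Metric.mem_ball_self hεpos, Metric.mem_ball_self hεpos, ?_⟩
  have h₁ := Metric.closure_ball_subset_closedBall (x := a) (ε := ε)
  have h₂ := Metric.closure_ball_subset_closedBall (x := b) (ε := ε)
  rw [Set.disjoint_left]
  intro p hp₁ hp₂
  have d₁ : dist p a ≤ ε := h₁ hp₁
  have d₂ : dist p b ≤ ε := h₂ hp₂
  have : dist a b ≤ dist p a + dist p b := by
    rw [dist_comm p a]; exact dist_triangle a p b
  linarith

/-- In a metrizable space, every open set is a countable union of closed sets. -/
lemma isOpen_iUnion_closed {α : Type*} [TopologicalSpace α]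
    [h : TopologicalSpace.MetrizableSpace α] {W : Set α} (hW : IsOpen W) :
    ∃ F : ℕ → Set α, (∀ n, IsClosed (F n)) ∧ W = ⋃ n, F n := by
  letI : MetricSpace α := TopologicalSpace.metrizableSpaceMetric α
  by_cases hc : Wᶜ = ∅
  · have hWu : W = univ := compl_empty_iff.mp hc
    exact ⟨fun _ => univ, fun _ => isClosed_univ, by rw [hWu, iUnion_const]⟩
  · have hne : Wᶜ.Nonempty := nonempty_iff_ne_empty.mpr hc
    refine ⟨fun n => {x | 1 / (n + 1 : ℝ) ≤ Metric.infDist x Wᶜ}, fun n => ?_, ?_⟩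
    · exact isClosed_le continuous_const (Metric.continuous_infDist_pt _)
    · ext x
      rw [mem_iUnion]
      constructor
      · intro hxW
        have hnm : x ∉ Wᶜ := fun hx => hx hxW
        have hpos : 0 < Metric.infDist x Wᶜ :=
          (hW.isClosed_compl.notMem_iff_infDist_pos hne).mp hnm
        obtain ⟨n, hn⟩ := exists_nat_one_div_lt hpos
        exact ⟨n, le_of_lt hn⟩
      · rintro ⟨n, hn⟩
        by_contra hxW
        have hz : Metric.infDist x Wᶜ = 0 := Metric.infDist_zero_of_mem hxW
        rw [mem_setOf_eq, hz] at hn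
        have : (0 : ℝ) < 1 / (n + 1 : ℝ) := by positivity
        linarith

/-- Baire-category auxiliary lemma: if `D` contains all rationals of `(-δ,δ)`, and the
complement of `D` is a countable union of sets `F n` each of which is "Michael-closed"
in the sense that its complement contains a Euclidean interval around each rational point,
then `D` contains an irrational point. -/
lemma baire_aux (δ : ℝ) (hδ : 0 < δ) (D : Set ℝ) (F : ℕ → Set ℝ)
    (hFeq : Dᶜ = ⋃ n, F n)
    (hJD : ∀ y : ℝ, |y| < δ → ¬Irrational y → y ∈ D)
    (hFball : ∀ n (r : ℚ), (r : ℝ) ∉ F n → ∃ ε > 0, ∀ y : ℝ, |y - r| < ε → y ∉ F n) :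
    ∃ y : ℝ, Irrational y ∧ y ∈ D := by
  set I : Set ℝ := Ioo (-δ) δ with hI
  have hnF : ∀ n (r : ℚ), |(r : ℝ)| < δ → (r : ℝ) ∉ F n := by
    intro n r hr hrF
    have hrD : (r : ℝ) ∈ D := hJD r hr (Rat.not_irrational r)
    have : (r : ℝ) ∈ Dᶜ := by rw [hFeq]; exact mem_iUnion.mpr ⟨n, hrF⟩
    exact this hrD
  have hnwd : ∀ n, IsNowhereDense (F n ∩ I) := by
    intro n
    rw [IsNowhereDense, eq_empty_iff_forall_notMem]
    intro x hx
    have hne : -δ ≠ δ := ne_of_lt (by linarith)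
    have hsub : closure (F n ∩ I) ⊆ Icc (-δ) δ := by
      refine (closure_mono inter_subset_right).trans ?_
      rw [hI, closure_Ioo hne]
    have hxI : x ∈ I := by
      have := interior_mono hsub hx
      rwa [interior_Icc] at this
    have hopen2 : IsOpen (interior (closure (F n ∩ I)) ∩ I) :=
      isOpen_interior.inter isOpen_Ioo
    obtain ⟨ε₂, hε₂, hball₂⟩ := Metric.isOpen_iff.mp hopen2 x ⟨hx, hxI⟩
    obtain ⟨r, hr₁, hr₂⟩ := exists_rat_btwn (by linarith : x - ε₂ < x + ε₂)
    have hrball : (r : ℝ) ∈ Metric.ball x ε₂ := by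
      rw [Metric.mem_ball, Real.dist_eq, abs_lt]
      constructor <;> [linarith; linarith]
    have hrmem := hball₂ hrball
    have hrcl : (r : ℝ) ∈ closure (F n ∩ I) := interior_subset hrmem.1
    have hrin : |(r : ℝ)| < δ := by
      have := hrmem.2
      rw [hI, mem_Ioo] at this
      rw [abs_lt]; exact this
    obtain ⟨ε'', hε'', hball''⟩ := hFball n r (hnF n r hrin)
    rw [Metric.mem_closure_iff] at hrcl
    obtain ⟨z, hz, hzd⟩ := hrcl ε'' hε''
    exact hball'' z (by rwa [Real.dist_eq, abs_sub_comm] at hzd) hz.1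
  have hQmeagre : IsMeagre (range ((↑) : ℚ → ℝ)) := by
    have hre : range ((↑) : ℚ → ℝ) = ⋃ n : ℕ, {(((Denumerable.eqv ℚ).symm n : ℚ) : ℝ)} := by
      ext y
      simp only [mem_range, mem_iUnion, mem_singleton_iff]
      constructor
      · rintro ⟨q, rfl⟩
        exact ⟨(Denumerable.eqv ℚ) q, by rw [Equiv.symm_apply_apply]⟩
      · rintro ⟨n, rfl⟩
        exact ⟨_, rfl⟩
    rw [hre]
    refine isMeagre_iUnion fun n => ?_
    have hnd : IsNowhereDense ({(((Denumerable.eqv ℚ).symm n : ℚ) : ℝ)} : Set ℝ) := by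
      rw [IsNowhereDense, closure_singleton, interior_eq_empty_iff_dense_compl]
      exact dense_compl_singleton _
    rw [isMeagre_iff_countable_union_isNowhereDense]
    exact ⟨{{(((Denumerable.eqv ℚ).symm n : ℚ) : ℝ)}}, by simpa using hnd, countable_singleton _,
      by simp⟩
  have hFmeagre : IsMeagre (⋃ n, F n ∩ I) := by
    refine isMeagre_iUnion fun n => ?_
    rw [isMeagre_iff_countable_union_isNowhereDense]
    exact ⟨{F n ∩ I}, by simpa using hnwd n, countable_singleton _, by simp⟩
  have hTmeagre : IsMeagre ((⋃ n, F n ∩ I) ∪ range ((↑) : ℚ → ℝ)) := by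
    rw [IsMeagre, compl_union]
    exact Filter.inter_mem hFmeagre hQmeagre
  have hdense : Dense ((⋃ n, F n ∩ I) ∪ range ((↑) : ℚ → ℝ))ᶜ := dense_of_mem_residual hTmeagre
  obtain ⟨y, hyI, hyT⟩ : ∃ y, y ∈ I ∧ y ∈ ((⋃ n, F n ∩ I) ∪ range ((↑) : ℚ → ℝ))ᶜ := by
    have h0I : (0 : ℝ) ∈ I := by rw [hI, mem_Ioo]; constructor <;> linarith
    obtain ⟨y, hy1, hy2⟩ := hdense.exists_mem_open isOpen_Ioo ⟨0, h0I⟩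
    exact ⟨y, hy2, hy1⟩
  rw [mem_compl_iff, mem_union, not_or] at hyT
  obtain ⟨hyF, hyQ⟩ := hyT
  refine ⟨y, hyQ, ?_⟩
  by_contra hyD
  have : y ∈ ⋃ n, F n := by rw [← hFeq]; exact hyD
  obtain ⟨n, hn⟩ := mem_iUnion.mp this
  exact hyF (mem_iUnion.mpr ⟨n, hn, hyI⟩)

theorem stmt8 (B₀ B₁ : Set ℝ) (hB₀ : IsBernstein B₀) (hB₁ : IsBernstein B₁)
    (hdisj : Disjoint B₀ B₁) (hunion : B₀ ∪ B₁ = {x : ℝ | Irrational x})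
    (X : Set (Fin 2 × ℝ))
    (hX : X = (({0} : Set (Fin 2)) ×ˢ B₁ ∪ ({1} : Set (Fin 2)) ×ˢ B₀)ᶜ)
    (tX : TopologicalSpace ↥X)
    (htX : tX = TopologicalSpace.induced (Subtype.val : ↥X → Fin 2 × ℝ) prodMichael)
    (f : ↥X → ℝ) (hf : ∀ p : ↥X, f p = (p : Fin 2 × ℝ).2) :
    ¬ ∃ (σX : TopologicalSpace ↥X) (σY : TopologicalSpace ℝ),
        (∀ U, σX.IsOpen U → tX.IsOpen U) ∧ @TopologicalSpace.MetrizableSpace ↥X σX ∧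
        (∀ U, σY.IsOpen U → michaelLine.IsOpen U) ∧ @TopologicalSpace.MetrizableSpace ℝ σY ∧
        IsPerfectMap σX σY f := by
  rintro ⟨σX, σY, hXle, hmX, hYle, hmY, -, hfcl, -⟩
  classical
  letI := σX
  -- Both Bernstein sets consist of irrationals.
  have hB0irr : B₀ ⊆ {x : ℝ | Irrational x} := hunion ▸ subset_union_left
  have hB1irr : B₁ ⊆ {x : ℝ | Irrational x} := hunion ▸ subset_union_right
  -- Rational second coordinates always give points of X.
  have hmemX : ∀ (i : Fin 2) (y : ℝ), ¬Irrational y → (i, y) ∈ X := by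
    intro i y hy
    rw [hX]
    rintro (⟨-, h2⟩ | ⟨-, h2⟩)
    · exact hy (hB1irr h2)
    · exact hy (hB0irr h2)
  have h0 : ¬Irrational (0 : ℝ) := by
    intro h; exact h ⟨0, by norm_num⟩
  set a : ↥X := ⟨((0 : Fin 2), (0 : ℝ)), hmemX 0 0 h0⟩ with ha
  set b : ↥X := ⟨((1 : Fin 2), (0 : ℝ)), hmemX 1 0 h0⟩ with hb
  have hab : a ≠ b := by
    intro h
    have := congrArg (fun p : ↥X => (p : Fin 2 × ℝ).1) h
    simp [ha, hb] at this
  -- disjoint closed neighborhoods of a and b in σX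
  obtain ⟨Va, Vb, hVao, hVbo, haVa, hbVb, hVdisj⟩ := exists_disjoint_closures σX hmX hab
  -- extract horizontal intervals inside Va, Vb
  have hextract : ∀ (V : Set ↥X), σX.IsOpen V → ∀ (i : Fin 2) (h : (i, (0:ℝ)) ∈ X),
      (⟨(i, (0:ℝ)), h⟩ : ↥X) ∈ V →
      ∃ ε > 0, ∀ y : ℝ, |y - 0| < ε → ∀ (hy : (i, y) ∈ X), (⟨(i, y), hy⟩ : ↥X) ∈ V := by
    intro V hV i h hmem
    have htV : tX.IsOpen V := hXle V hV
    rw [htX] at htV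
    obtain ⟨O, hO, hOeq⟩ := (isOpen_induced_iff (t := prodMichael)).mp htV
    have hOm : (i, (0:ℝ)) ∈ O := by
      have : (⟨(i, (0:ℝ)), h⟩ : ↥X) ∈ Subtype.val ⁻¹' O := by rw [hOeq]; exact hmem
      exact this
    obtain ⟨ε, hε, hball⟩ := prodMichael_rat_nbhd hO i h0 hOm
    refine ⟨ε, hε, fun y hy hyX => ?_⟩
    have : (⟨(i, y), hyX⟩ : ↥X) ∈ Subtype.val ⁻¹' O := hball y hy
    rwa [hOeq] at this
  obtain ⟨εa, hεa, hba⟩ := hextract Va hVao 0 _ haVa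
  obtain ⟨εb, hεb, hbb⟩ := hextract Vb hVbo 1 _ hbVb
  set δ := min εa εb with hδ
  have hδpos : 0 < δ := lt_min hεa hεb
  -- the two "rational interval" sets and their σX-closures
  set A' : Set ↥X := {p : ↥X | (p : Fin 2 × ℝ).1 = 0 ∧ |(p : Fin 2 × ℝ).2| < δ ∧
    ¬Irrational (p : Fin 2 × ℝ).2} with hA'
  set B' : Set ↥X := {p : ↥X | (p : Fin 2 × ℝ).1 = 1 ∧ |(p : Fin 2 × ℝ).2| < δ ∧
    ¬Irrational (p : Fin 2 × ℝ).2} with hB'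
  have hA'sub : A' ⊆ Va := by
    rintro p ⟨h1, h2, h3⟩
    have hy : ((0 : Fin 2), (p : Fin 2 × ℝ).2) ∈ X := by rw [← h1]; exact p.2
    have := hba (p : Fin 2 × ℝ).2 (by simpa using h2.trans_le (min_le_left _ _)) hy
    have hpe : p = (⟨((0 : Fin 2), (p : Fin 2 × ℝ).2), hy⟩ : ↥X) := by
      apply Subtype.ext
      exact Prod.ext h1 rfl
    rwa [hpe]
  have hB'sub : B' ⊆ Vb := by
    rintro p ⟨h1, h2, h3⟩
    have hy : ((1 : Fin 2), (p : Fin 2 × ℝ).2) ∈ X := by rw [← h1]; exact p.2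
    have := hbb (p : Fin 2 × ℝ).2 (by simpa using h2.trans_le (min_le_right _ _)) hy
    have hpe : p = (⟨((1 : Fin 2), (p : Fin 2 × ℝ).2), hy⟩ : ↥X) := by
      apply Subtype.ext
      exact Prod.ext h1 rfl
    rwa [hpe]
  set C₁ := closure A' with hC₁
  set C₂ := closure B' with hC₂
  have hCdisj : Disjoint C₁ C₂ := by
    rw [Set.disjoint_left]
    intro p hp1 hp2
    rw [hC₁] at hp1
    rw [hC₂] at hp2
    exact Set.disjoint_left.mp hVdisj ((closure_mono hA'sub) hp1) ((closure_mono hB'sub) hp2)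
  -- the images are σY-closed and contain all rationals of (-δ, δ)
  have hD₁ : @IsClosed ℝ σY (f '' C₁) :=
    hfcl C₁ (by rw [hC₁]; exact isClosed_closure)
  have hD₂ : @IsClosed ℝ σY (f '' C₂) :=
    hfcl C₂ (by rw [hC₂]; exact isClosed_closure)
  set D := f '' C₁ ∩ f '' C₂ with hD
  have hDcl : @IsClosed ℝ σY D := @IsClosed.inter ℝ _ _ σY hD₁ hD₂
  have hJD : ∀ y : ℝ, |y| < δ → ¬Irrational y → y ∈ D := by
    intro y hyδ hyrat
    constructor
    · refine ⟨⟨((0 : Fin 2), y), hmemX 0 y hyrat⟩, subset_closure ⟨rfl, hyδ, hyrat⟩, ?_⟩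
      rw [hf]
    · refine ⟨⟨((1 : Fin 2), y), hmemX 1 y hyrat⟩, subset_closure ⟨rfl, hyδ, hyrat⟩, ?_⟩
      rw [hf]
  -- write the complement of D as a countable union of σY-closed sets
  have hWopen : @IsOpen ℝ σY Dᶜ := @IsClosed.isOpen_compl ℝ σY D hDcl
  obtain ⟨F, hFcl, hFeq⟩ := @isOpen_iUnion_closed ℝ σY hmY Dᶜ hWopen
  have hFball : ∀ n (r : ℚ), (r : ℝ) ∉ F n → ∃ ε > 0, ∀ y : ℝ, |y - r| < ε → y ∉ F n := by
    intro n r hr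
    have hFno : michaelLine.IsOpen (F n)ᶜ :=
      hYle _ (@IsClosed.isOpen_compl ℝ σY (F n) (hFcl n))
    obtain ⟨ε, hε, h⟩ := michael_rat_nbhd hFno _ hr (Rat.not_irrational r)
    exact ⟨ε, hε, fun y hy => h y hy⟩
  have hFeqc : Dᶜ = ⋃ n, F n := hFeq
  obtain ⟨y, hyirr, hyD⟩ := baire_aux δ hδpos D F hFeqc hJD hFball
  -- the fiber over the irrational y is a single point, contradiction with disjointness
  obtain ⟨p₁, hp₁C, hfp₁⟩ := hyD.1
  obtain ⟨p₂, hp₂C, hfp₂⟩ := hyD.2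
  have hy2 : y ∈ B₀ ∪ B₁ := by rw [hunion]; exact hyirr
  have h1 : (p₁ : Fin 2 × ℝ).2 = y := by rw [← hf p₁]; exact hfp₁
  have h2 : (p₂ : Fin 2 × ℝ).2 = y := by rw [← hf p₂]; exact hfp₂
  have htwo : ∀ i : Fin 2, i = 0 ∨ i = 1 := by decide
  have hfst : ∀ v : Fin 2 × ℝ, v ∈ X → v.2 = y →
      v.1 = (if y ∈ B₀ then (0 : Fin 2) else 1) := by
    intro v hv hvy
    rw [hX, mem_compl_iff, mem_union, not_or] at hv
    obtain ⟨hn1, hn2⟩ := hv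
    by_cases hy0 : y ∈ B₀
    · rw [if_pos hy0]
      rcases htwo v.1 with h | h
      · exact h
      · exact absurd (mem_prod.mpr ⟨by simp [h], by rw [hvy]; exact hy0⟩) hn2
    · rw [if_neg hy0]
      have hy1 : y ∈ B₁ := hy2.resolve_left hy0
      rcases htwo v.1 with h | h
      · exact absurd (mem_prod.mpr ⟨by simp [h], by rw [hvy]; exact hy1⟩) hn1
      · exact h
  have hps : p₁ = p₂ :=
    Subtype.ext (Prod.ext (by rw [hfst _ p₁.2 h1, hfst _ p₂.2 h2]) (h1.trans h2.symm))
  exact Set.disjoint_left.mp hCdisj hp₁C (hps ▸ hp₂C)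
end

section
/- Let (Y, τ) be a topological space and let (σ_m)_{m∈ℕ} be a sequence of topologies on Y with σ_m ⊆ τ for all m and with (Y, σ_m) metrizable for all m. Then there exists a topology σ on Y with σ ⊆ τ, with σ_m ⊆ σ for all m, and with (Y, σ) metrizable. -/
/-! The required topology is the supremum of the `σ m` (in Mathlib's order on topologies, where
finer is smaller, the infimum `⨅ m, σ m`). It is coarser than `τ`, and it is metrizable because
the diagonal map embeds it into the countable product `Π m, (Y, σ m)`, which is metrizable. -/

open Topology

theorem TopologicalSpace.metrizableSpace_pi_countable {ι : Type*} [Countable ι] {A : ι → Type*}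
    [∀ i, TopologicalSpace (A i)] [∀ i, MetrizableSpace (A i)] : MetrizableSpace (∀ i, A i) := by
  let _ := Encodable.ofCountable ι
  let _ := fun i => pseudoMetrizableSpacePseudoMetric (A i)
  -- its uniformity is `Pi.uniformSpace`, so it induces the product topology on the nose
  let _ := PiCountable.pseudoEMetricSpace (F := A)
  infer_instance

theorem TopologicalSpace.metrizableSpace_iInf {ι Y : Type*} [Countable ι] [Nonempty ι]
    (t : ι → TopologicalSpace Y) (ht : ∀ i, @MetrizableSpace Y (t i)) :
    @MetrizableSpace Y (⨅ i, t i) := by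
  let _ : TopologicalSpace Y := ⨅ i, t i
  let _ : TopologicalSpace (ι → Y) := @Pi.topologicalSpace ι (fun _ => Y) t
  have : MetrizableSpace (ι → Y) := @metrizableSpace_pi_countable ι _ (fun _ => Y) t ht
  have hdiag : IsEmbedding (fun (y : Y) (_ : ι) => y) := by
    refine ⟨⟨?_⟩, fun a b h => congrFun h (Classical.arbitrary ι)⟩
    change ⨅ i, t i = TopologicalSpace.induced _ (⨅ i, TopologicalSpace.induced _ (t i))
    simp only [induced_iInf, induced_compose]
    exact iInf_congr fun i => (@induced_id Y (t i)).symm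
  exact hdiag.metrizableSpace

theorem stmt11 {Y : Type*} (τ : TopologicalSpace Y) (σ : ℕ → TopologicalSpace Y)
    (hcoarse : ∀ m, ∀ U, (σ m).IsOpen U → τ.IsOpen U)
    (hmetr : ∀ m, @TopologicalSpace.MetrizableSpace Y (σ m)) :
    ∃ σ' : TopologicalSpace Y,
      (∀ U, σ'.IsOpen U → τ.IsOpen U) ∧
      (∀ m, ∀ U, (σ m).IsOpen U → σ'.IsOpen U) ∧
      @TopologicalSpace.MetrizableSpace Y σ' :=
  ⟨⨅ m, σ m, (le_iInf hcoarse : τ ≤ ⨅ m, σ m), iInf_le σ,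
    TopologicalSpace.metrizableSpace_iInf σ hmetr⟩
end

section
/- Let (X, τ) be a topological space and let 𝓕 be a locally finite family of closed subsets of X. For each finite subfamily F ⊆ 𝓕 define A(F) := ⋂F \ ⋃{C ∈ 𝓕 : C ∉ F}. Then for every n ∈ ℕ, the family {A(F) : F ⊆ 𝓕, |F| = n} is pairwise disjoint and locally finite in (X, τ). -/
open Set Topology

/-- `AofF 𝓕 F = ⋂ F \ ⋃ {C ∈ 𝓕 : C ∉ F}` (with `⋂ ∅ = X`). -/
def AofF {X : Type*} (𝓕 F : Set (Set X)) : Set X :=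
  ⋂₀ F \ ⋃₀ {C | C ∈ 𝓕 ∧ C ∉ F}

theorem stmt13 {X : Type*} [t : TopologicalSpace X]
    (𝓕 : Set (Set X)) (hlf : LocallyFiniteFamily t 𝓕) (hcl : ∀ C ∈ 𝓕, IsClosed C)
    (n : ℕ) :
    (∀ F G : Set (Set X), F ⊆ 𝓕 → G ⊆ 𝓕 → F.Finite → G.Finite →
        F.ncard = n → G.ncard = n → F ≠ G → Disjoint (AofF 𝓕 F) (AofF 𝓕 G)) ∧
    (∀ x : X, ∃ U ∈ nhds x,
        {F : Set (Set X) | F ⊆ 𝓕 ∧ F.Finite ∧ F.ncard = n ∧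
          (AofF 𝓕 F ∩ U).Nonempty}.Finite) := by
  constructor
  · intro F G hF hG hFf hGf hFn hGn hne
    have hns : ¬ F ⊆ G := by
      intro hsub
      exact hne (Set.eq_of_subset_of_ncard_le hsub (by omega) hGf)
    obtain ⟨C, hCF, hCG⟩ := Set.not_subset.mp hns
    rw [Set.disjoint_left]
    intro a haF haG
    exact haG.2 ⟨C, ⟨hF hCF, hCG⟩, haF.1 C hCF⟩
  · intro x
    obtain ⟨U, hU, hfin⟩ := hlf x
    refine ⟨U, hU, (hfin.finite_subsets).subset ?_⟩
    rintro F ⟨hF𝓕, -, -, y, hyA, hyU⟩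
    intro C hCF
    exact ⟨hF𝓕 hCF, y, hyA.1 C hCF, hyU⟩
end
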